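/- arXiv:2411.09682 — 2 statements merged into one kernel-verified Lean document; each statement's English description precedes it below -/
import Mathlib

section
/- Let μ = (μ_1,…,μ_{n+3}) be rational numbers in (0,1) with Σμ_i = 2 and α_i = exp(-2π√-1 μ_i). Consider the (n+1)×(n+1) skew-Hermitian matrix H over ℚ(ζ_d) (d the common denominator) with diagonal entries H_{ii} = (1-α_iα_{i+1})/((1-α_i)(1-α_{i+1})), super-diagonal entries H_{i,i+1} = 1/(α_{i+1}-1), sub-diagonal entries H_{i+1,i} = -conj(1/(α_{i+1}-1)), and all other entries zero. Then det H = u / Π_{i=1}^{n+3}(1-α_i) for some u ∈ N_{K/F}(K^×), where K = ℚ(ζ_d) and F = K ∩ ℝ. -/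
/-! Being tridiagonal, the Gram matrix has leading principal minors `D k` obeying the three-term
recurrence `D (k+2) = f (k+1) D (k+1) - u k l k D k`. Because `|α i| = 1`, the off-diagonal product
is `u k l k = α (k+1) / (1 - α (k+1))²`, and induction yields the closed form
`D k ∏_{i ≤ k} (1 - α i) = 1 - ∏_{i ≤ k} α i`. For the whole matrix the partial product
`∏_{i ≤ n+1} α i` is `(α (n+2))⁻¹ = conj (α (n+2))`, since all the `α i` multiply to `1`; hence
`det H ∏ (1 - α i) = w conj w` with `w = 1 - α (n+2) ∈ ℚ(ζ_d)`. -/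

namespace Matrix

variable {R : Type*} [CommRing R]

def tridiagonal (f u l : ℕ → R) (n : ℕ) : Matrix (Fin n) (Fin n) R :=
  of fun i j =>
    if (i : ℕ) = j then f i
    else if (j : ℕ) = i + 1 then u i
    else if (i : ℕ) = j + 1 then l j
    else 0

variable (f u l : ℕ → R)

theorem tridiagonal_apply_eq_zero {n : ℕ} {i j : Fin n} (h : (i : ℕ) + 1 < j ∨ (j : ℕ) + 1 < i) :
    tridiagonal f u l n i j = 0 := by
  rw [tridiagonal, of_apply, if_neg, if_neg, if_neg] <;> omega

@[simp]
theorem det_tridiagonal_zero : (tridiagonal f u l 0).det = 1 := det_isEmpty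

@[simp]
theorem det_tridiagonal_one : (tridiagonal f u l 1).det = f 0 := by
  simp [tridiagonal]

theorem tridiagonal_submatrix_castSucc (n : ℕ) :
    (tridiagonal f u l (n + 1)).submatrix Fin.castSucc Fin.castSucc = tridiagonal f u l n :=
  rfl

theorem det_tridiagonal_submatrix_castSucc_succAbove (n : ℕ) :
    ((tridiagonal f u l (n + 2)).submatrix Fin.castSucc (Fin.last n).castSucc.succAbove).det =
      u n * (tridiagonal f u l n).det := by
  have hcol : (Fin.last n).castSucc.succAbove ∘ Fin.castSucc = Fin.castSucc ∘ Fin.castSucc :=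
    funext fun j => Fin.succAbove_castSucc_of_lt _ _ (Fin.castSucc_lt_last j)
  rw [det_succ_column _ (Fin.last n), Fintype.sum_eq_single (Fin.last n)]
  · rw [submatrix_submatrix, Fin.succAbove_last, hcol, ← submatrix_submatrix,
      tridiagonal_submatrix_castSucc, tridiagonal_submatrix_castSucc, submatrix_apply,
      Fin.succAbove_castSucc_self, Even.neg_one_pow ⟨_, rfl⟩]
    simp [tridiagonal]
  · intro i hi
    rw [submatrix_apply, Fin.succAbove_castSucc_self, tridiagonal_apply_eq_zero]
    · simp
    · left
      simp [Fin.val_lt_last hi]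

theorem det_tridiagonal_succ_succ (n : ℕ) :
    (tridiagonal f u l (n + 2)).det =
      f (n + 1) * (tridiagonal f u l (n + 1)).det - u n * l n * (tridiagonal f u l n).det := by
  rw [det_succ_row _ (Fin.last (n + 1)),
    Fintype.sum_eq_add (Fin.last n).castSucc (Fin.last (n + 1)) (by simp [Fin.ext_iff])]
  · have hl : tridiagonal f u l (n + 2) (Fin.last (n + 1)) (Fin.last n).castSucc = l n := by
      simp [tridiagonal]
      omega
    have hf : tridiagonal f u l (n + 2) (Fin.last (n + 1)) (Fin.last (n + 1)) = f (n + 1) := by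
      simp [tridiagonal]
    rw [hl, hf, Fin.succAbove_last, det_tridiagonal_submatrix_castSucc_succAbove,
      tridiagonal_submatrix_castSucc, Fin.val_castSucc,
      Fin.val_last, Fin.val_last, Odd.neg_one_pow ⟨n, by ring⟩, Even.neg_one_pow ⟨_, rfl⟩]
    ring
  · rintro j ⟨hj₁, hj₂⟩
    rw [tridiagonal_apply_eq_zero]
    · simp
    · have hj : (j : ℕ) < n + 1 := Fin.val_lt_last hj₂
      have hjn : (j : ℕ) ≠ n := fun h => hj₁ (Fin.ext h)
      right
      rw [Fin.val_last]
      omega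

end Matrix

open Finset Matrix

theorem det_tridiagonal_mul_prod_one_sub {K : Type*} [Field K] (x u l : ℕ → K)
    (hx : ∀ i, x i ≠ 1) (hul : ∀ i, u i * l i = x (i + 1) / (1 - x (i + 1)) ^ 2) (k : ℕ) :
    (tridiagonal (fun i => (1 - x i * x (i + 1)) / ((1 - x i) * (1 - x (i + 1)))) u l k).det *
        ∏ i ∈ range (k + 1), (1 - x i) = 1 - ∏ i ∈ range (k + 1), x i := by
  have hx₁ : ∀ i, 1 - x i ≠ 0 := fun i => sub_ne_zero.2 (hx i).symm
  set g : ℕ → K := fun i => (1 - x i * x (i + 1)) / ((1 - x i) * (1 - x (i + 1)))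
  induction k using Nat.twoStepInduction with
  | zero => simp
  | one =>
    simp only [det_tridiagonal_one, g, prod_range_succ, prod_range_zero, one_mul, zero_add]
    field_simp [hx₁ 0, hx₁ 1]
  | more k ih₀ ih₁ =>
    rw [det_tridiagonal_succ_succ, hul]
    simp only [prod_range_succ] at ih₀ ih₁ ⊢
    generalize (tridiagonal g u l k).det = D₀ at *
    generalize (tridiagonal g u l (k + 1)).det = D₁ at *
    generalize ∏ i ∈ range k, (1 - x i) = Q at *
    generalize ∏ i ∈ range k, x i = P at *
    simp only [g]
    field_simp [hx₁ k, hx₁ (k + 1), hx₁ (k + 1 + 1)]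
    linear_combination
      (1 - x (k + 1) * x (k + 1 + 1)) * ih₁ - x (k + 1) * (1 - x (k + 1 + 1)) * ih₀

open ComplexConjugate

theorem one_div_sub_one_mul_neg_conj {z : ℂ} (hz : ‖z‖ = 1) (hz₁ : z ≠ 1) :
    1 / (z - 1) * -conj (1 / (z - 1)) = z / (1 - z) ^ 2 := by
  have hz₀ : z ≠ 0 := by rintro rfl; simp at hz
  have h₁ : z - 1 ≠ 0 := sub_ne_zero.2 hz₁
  have h₂ : 1 - z ≠ 0 := sub_ne_zero.2 hz₁.symm
  rw [map_div₀, map_one, map_sub, map_one, ← Complex.inv_eq_conj hz]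
  field_simp
  ring

noncomputable def deligneMostowGram (x : ℕ → ℂ) (k : ℕ) : Matrix (Fin k) (Fin k) ℂ :=
  tridiagonal (fun i => (1 - x i * x (i + 1)) / ((1 - x i) * (1 - x (i + 1))))
    (fun i => 1 / (x (i + 1) - 1)) (fun i => -conj (1 / (x (i + 1) - 1))) k

theorem det_deligneMostowGram_mul_prod_one_sub {x : ℕ → ℂ} (hx : ∀ i, ‖x i‖ = 1)
    (hx₁ : ∀ i, x i ≠ 1) (k : ℕ) :
    (deligneMostowGram x k).det * ∏ i ∈ range (k + 1), (1 - x i) = 1 - ∏ i ∈ range (k + 1), x i :=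
  det_tridiagonal_mul_prod_one_sub x _ _ hx₁
    (fun i => one_div_sub_one_mul_neg_conj (hx (i + 1)) (hx₁ (i + 1))) k

theorem det_deligneMostowGram_mul_prod_one_sub_eq_mul_conj {k : ℕ} {α : Fin (k + 2) → ℂ}
    (hα : ∀ i, ‖α i‖ = 1) (hα₁ : ∀ i, α i ≠ 1) (hprod : ∏ i, α i = 1) :
    (deligneMostowGram (fun j => α (Fin.ofNat _ j)) k).det * ∏ i, (1 - α i) =
      (1 - α (Fin.last _)) * conj (1 - α (Fin.last _)) := by
  set x : ℕ → ℂ := fun j => α (Fin.ofNat _ j)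
  have hfin : ∀ g : ℂ → ℂ, ∏ i, g (α i) = ∏ i ∈ range (k + 2), g (x i) := fun g => by
    rw [← Fin.prod_univ_eq_prod_range]
    simp [x]
  have hlast : ∏ i ∈ range (k + 1), x i = conj (x (k + 1)) := by
    rw [← Complex.inv_eq_conj (hα _)]
    refine eq_inv_of_mul_eq_one_left ?_
    rw [← prod_range_succ]
    exact (hfin id).symm.trans hprod
  rw [hfin, prod_range_succ, ← mul_assoc,
    det_deligneMostowGram_mul_prod_one_sub (fun _ => hα _) (fun _ => hα₁ _), hlast, map_sub,
    map_one]
  simp [x]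
  ring

theorem Fin.castLE_eq_ofNat {m k : ℕ} [NeZero m] (h : k ≤ m) (i : Fin k) :
    Fin.castLE h i = Fin.ofNat m i :=
  Fin.ext (by simp [Nat.mod_eq_of_lt (i.isLt.trans_le h)])

theorem Complex.exp_neg_two_pi_I_mul_div (a d : ℕ) :
    Complex.exp (-(2 * Real.pi * Complex.I) * a / d) =
      (Complex.exp (2 * Real.pi * Complex.I / d) ^ a)⁻¹ := by
  rw [← Complex.exp_nat_mul, ← Complex.exp_neg]
  ring_nf

/-- Determinant of the Deligne–Mostow Gram matrix: for weights μ_i = a_i/d ∈ (0,1)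
    with Σμ_i = 2 and α_i = exp(-2πi·a_i/d), the tridiagonal (skew-Hermitian) Gram
    matrix H (diagonal (1-α_iα_{i+1})/((1-α_i)(1-α_{i+1})), super-diagonal
    1/(α_{i+1}-1), sub-diagonal the negated conjugate) satisfies
    det H = u / Π_i (1-α_i) with u = w·conj(w) a norm from K = ℚ(ζ_d). -/
theorem stmt5 (n d : ℕ) (hd : 0 < d) (a : Fin (n+3) → ℕ)
    (ha : ∀ i, 0 < a i ∧ a i < d) (hsum : ∑ i, a i = 2 * d)
    (α : Fin (n+3) → ℂ)
    (hα : ∀ i, α i = Complex.exp (-(2 * Real.pi * Complex.I) * (a i : ℂ) / (d : ℂ)))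
    (H : Matrix (Fin (n+1)) (Fin (n+1)) ℂ)
    (hH : ∀ i j : Fin (n+1),
      H i j =
        if (i : ℕ) = (j : ℕ) then
          (1 - α (Fin.castLE (by omega) i) * α (Fin.castLE (by omega) i.succ)) /
            ((1 - α (Fin.castLE (by omega) i)) * (1 - α (Fin.castLE (by omega) i.succ)))
        else if (j : ℕ) = (i : ℕ) + 1 then
          1 / (α (Fin.castLE (by omega) j) - 1)
        else if (i : ℕ) = (j : ℕ) + 1 then
          -(starRingEnd ℂ) (1 / (α (Fin.castLE (by omega) i) - 1))
        else 0) :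
    ∃ w : ℂ,
      w ∈ IntermediateField.adjoin ℚ
          ({Complex.exp (2 * Real.pi * Complex.I / (d : ℂ))} : Set ℂ) ∧
      w ≠ 0 ∧
      H.det * ∏ i, (1 - α i) = w * (starRingEnd ℂ) w := by
  set ζ := Complex.exp (2 * Real.pi * Complex.I / (d : ℂ))
  have hζ : IsPrimitiveRoot ζ d := Complex.isPrimitiveRoot_exp d hd.ne'
  have hαζ : ∀ i, α i = (ζ ^ a i)⁻¹ := fun i =>
    (hα i).trans (Complex.exp_neg_two_pi_I_mul_div _ _)
  have hα₁ : ∀ i, α i ≠ 1 := fun i => by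
    rw [hαζ]
    exact inv_ne_one.2 (hζ.pow_ne_one_of_pos_of_lt (ha i).1.ne' (ha i).2)
  have hH' : H = deligneMostowGram (fun j => α (Fin.ofNat _ j)) (n + 1) := by
    ext i j
    rw [hH]
    simp only [deligneMostowGram, tridiagonal, of_apply, Fin.castLE_eq_ofNat, Fin.val_succ]
    split_ifs with h₁ h₂ h₃
    · rfl
    · rw [h₂]
    · rw [h₃]
    · rfl
  refine ⟨1 - α (Fin.last _), ?_, sub_ne_zero.2 (hα₁ _).symm, ?_⟩
  · rw [hαζ]
    exact sub_mem (one_mem _) (inv_mem (pow_mem (IntermediateField.mem_adjoin_simple_self ℚ ζ) _))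
  · rw [hH']
    refine det_deligneMostowGram_mul_prod_one_sub_eq_mul_conj (fun i => ?_) hα₁ ?_
    · rw [hαζ, norm_inv, norm_pow, hζ.norm'_eq_one hd.ne', one_pow, inv_one]
    · simp_rw [hαζ]
      rw [prod_inv_distrib, prod_pow_eq_pow_sum, hsum, pow_mul', hζ.pow_eq_one, one_pow, inv_one]
end

section
/- Let H be the 2×2 skew-Hermitian matrix with entries a = (1-α_1α_2)/((1-α_1)(1-α_2)) and c = (1-α_2α_3)/((1-α_2)(1-α_3)) on the diagonal, b = 1/(α_2-1) in position (1,2) and -\bar{b} in position (2,1), where α_i = e^{-2πiμ_i} with μ_i ∈ (0,1) rational and |α_i| = 1. Then after the change of basis replacing the second basis vector γ_2 by γ̂_2 = ((α_2-α_1α_2)/(1-α_1α_2))γ_1 + γ_2 (assuming α_1α_2 ≠ 1), the form becomes diagonal with entries a and (1-α_1α_2α_3)/((1-α_1α_2)(1-α_3)). -/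
/-!
Congruence by `P = !![1, 0; t, 1]` adds `t` times the first row to the second and `t̄` times the
first column to the second. On the unit circle `ᾱ = α⁻¹`, so `t̄` and `b̄` are rational in the
`αᵢ`, and the choice of `t` makes the off-diagonal entries `a t̄ + b` and `t a - b̄` vanish. The
corner entry then collapses to `t b + c`, which is `c` with `α₂` replaced by `α₁ α₂`.
-/

open Matrix ComplexConjugate

theorem Matrix.fin_two_lowerUnitriangular_mul_mul_conjTranspose {R : Type*} [Semiring R]
    [StarRing R] (t a b c d : R) :
    !![1, 0; t, 1] * !![a, b; c, d] * (!![1, 0; t, 1])ᴴ =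
      !![a, a * star t + b; t * a + c, (t * a + c) * star t + (t * b + d)] := by
  ext i j
  fin_cases i <;> fin_cases j <;> simp [mul_apply, Fin.sum_univ_two, conjTranspose_apply]

namespace Complex

theorem conj_one_div_sub_one_of_norm_eq_one {z : ℂ} (hz : ‖z‖ = 1) :
    conj (1 / (z - 1)) = z / (1 - z) := by
  have hz₀ : z ≠ 0 := by rintro rfl; simp at hz
  rw [map_div₀, map_sub, map_one, ← inv_eq_conj hz]
  field_simp

theorem conj_sub_mul_div_one_sub_mul_of_norm_eq_one {z w : ℂ} (hz : ‖z‖ = 1) (hw : ‖w‖ = 1)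
    (hzw : z * w ≠ 1) :
    conj ((w - z * w) / (1 - z * w)) = (1 - z) / (1 - z * w) := by
  have hz₀ : z ≠ 0 := by rintro rfl; simp at hz
  have hw₀ : w ≠ 0 := by rintro rfl; simp at hw
  have hwz : w * z ≠ 1 := by rwa [mul_comm]
  simp only [map_div₀, map_sub, map_mul, map_one, ← inv_eq_conj hz, ← inv_eq_conj hw]
  field_simp
  ring

end Complex

theorem stmt7_general (α₁ α₂ α₃ : ℂ)
    (habs1 : ‖α₁‖ = 1) (habs2 : ‖α₂‖ = 1)
    (h1 : α₁ ≠ 1) (h2 : α₂ ≠ 1) (h3 : α₃ ≠ 1) (h12 : α₁ * α₂ ≠ 1)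
    (a b c t : ℂ)
    (ha : a = (1 - α₁ * α₂) / ((1 - α₁) * (1 - α₂)))
    (hc : c = (1 - α₂ * α₃) / ((1 - α₂) * (1 - α₃)))
    (hb : b = 1 / (α₂ - 1))
    (ht : t = (α₂ - α₁ * α₂) / (1 - α₁ * α₂))
    (H P : Matrix (Fin 2) (Fin 2) ℂ)
    (hH : H = !![a, b; -(starRingEnd ℂ) b, c])
    (hP : P = !![1, 0; t, 1]) :
    P * H * Pᴴ = !![a, 0; 0, (1 - α₁ * α₂ * α₃) / ((1 - α₁ * α₂) * (1 - α₃))] := by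
  have hconj_t : conj t = (1 - α₁) / (1 - α₁ * α₂) :=
    ht ▸ Complex.conj_sub_mul_div_one_sub_mul_of_norm_eq_one habs1 habs2 h12
  have hconj_b : conj b = α₂ / (1 - α₂) := hb ▸ Complex.conj_one_div_sub_one_of_norm_eq_one habs2
  -- `field_simp` normalises `α₁ * α₂` to `α₂ * α₁` and then needs this form
  have h21 : α₂ * α₁ ≠ 1 := by rwa [mul_comm]
  have upper : a * conj t + b = 0 := by
    rw [ha, hb, hconj_t]
    field_simp
    ring
  have lower : t * a + -conj b = 0 := by
    rw [ha, ht, hconj_b]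
    field_simp
    ring
  have corner : t * b + c = (1 - α₁ * α₂ * α₃) / ((1 - α₁ * α₂) * (1 - α₃)) := by
    rw [ht, hb, hc]
    field_simp
    ring
  rw [hH, hP, fin_two_lowerUnitriangular_mul_mul_conjTranspose, Complex.star_def, upper, lower,
    corner]
  simp

/-- Merging two weights (2×2 case): for unit complex numbers α₁, α₂, α₃, each ≠ 1,
    with α₁α₂ ≠ 1, the change of basis γ̂₂ = ((α₂-α₁α₂)/(1-α₁α₂))γ₁ + γ₂
    diagonalizes the skew-Hermitian Gram matrix
    H = !![a, b; -conj b, c] into !![a, 0; 0, (1-α₁α₂α₃)/((1-α₁α₂)(1-α₃))]. -/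
theorem stmt7 (α₁ α₂ α₃ : ℂ)
    (habs1 : ‖α₁‖ = 1) (habs2 : ‖α₂‖ = 1)
    (habs3 : ‖α₃‖ = 1)
    (h1 : α₁ ≠ 1) (h2 : α₂ ≠ 1) (h3 : α₃ ≠ 1) (h12 : α₁ * α₂ ≠ 1)
    (a b c t : ℂ)
    (ha : a = (1 - α₁ * α₂) / ((1 - α₁) * (1 - α₂)))
    (hc : c = (1 - α₂ * α₃) / ((1 - α₂) * (1 - α₃)))
    (hb : b = 1 / (α₂ - 1))
    (ht : t = (α₂ - α₁ * α₂) / (1 - α₁ * α₂))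
    (H P : Matrix (Fin 2) (Fin 2) ℂ)
    (hH : H = !![a, b; -(starRingEnd ℂ) b, c])
    (hP : P = !![1, 0; t, 1]) :
    P * H * Pᴴ = !![a, 0; 0, (1 - α₁ * α₂ * α₃) / ((1 - α₁ * α₂) * (1 - α₃))] :=
  stmt7_general α₁ α₂ α₃ habs1 habs2 h1 h2 h3 h12 a b c t ha hc hb ht H P hH hP
end
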